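/- Let A ∈ ℝ^{m×n}, b ∈ ℝ^m, c ∈ ℝⁿ. Suppose the 2n×2n permutation matrix Q̃ = [[Q₁, Q₂], [Q₂, Q₁]] and the (m+n)×(m+n) block-diagonal permutation matrix diag(P₁, P₂) satisfy diag(P₁,P₂)·[[A,-A],[I,I]]·Q̃ = [[A,-A],[I,I]], Q̃·(c,-c) = (c,-c), and diag(P₁,P₂)·(2b-Ae, e) = (2b-Ae, e). Define Q = Q₁ - Q₂ and q = (e - Qe)/2. Then Qᵀc = c, P₁AQ = A, and P₁(b - Aq) = b. -/
import Mathlib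


open Matrix BigOperators

/-- A signed permutation matrix: exactly one nonzero entry in each row and
each column, each nonzero entry being `1` or `-1`. -/
def IsSignedPerm {ι : Type*} (Q : Matrix ι ι ℝ) : Prop :=
  (∀ i, ∃! j, Q i j ≠ 0) ∧ (∀ j, ∃! i, Q i j ≠ 0) ∧
  (∀ i j, Q i j ≠ 0 → Q i j = 1 ∨ Q i j = -1)

/-- A permutation matrix: a 0-1 matrix with exactly one `1` in each row and
each column. -/
def IsPermMatrix {ι : Type*} (P : Matrix ι ι ℝ) : Prop :=
  (∀ i j, P i j = 0 ∨ P i j = 1) ∧ (∀ i, ∃! j, P i j = 1) ∧ (∀ j, ∃! i, P i j = 1)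

lemma perm_tmul {ι : Type*} [Fintype ι] [DecidableEq ι] {P : Matrix ι ι ℝ}
    (hP : IsPermMatrix P) : Pᵀ * P = 1 := by
  obtain ⟨h01, hrow, hcol⟩ := hP
  ext j k
  obtain ⟨i₀, hi₀, hi₀u⟩ := hcol j
  rw [Matrix.mul_apply]
  have key : ∀ i ∈ Finset.univ, Pᵀ j i * P i k = if i = i₀ then P i₀ k else 0 := by
    intro i _
    by_cases h : i = i₀
    · subst h; simp [Matrix.transpose_apply, hi₀]
    · rcases h01 i j with h0 | h1
      · simp [Matrix.transpose_apply, h0, h]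
      · exact absurd (hi₀u i h1) h
  rw [Finset.sum_congr rfl key, Finset.sum_ite_eq' Finset.univ i₀]
  simp only [Finset.mem_univ, if_true]
  by_cases hjk : j = k
  · subst hjk; simp [hi₀, Matrix.one_apply]
  · have hk : P i₀ k = 0 := by
      rcases h01 i₀ k with h0 | h1
      · exact h0
      · obtain ⟨j', hj', hj'u⟩ := hrow i₀
        exact absurd ((hj'u j hi₀).trans (hj'u k h1).symm) hjk
    simp [hk, Matrix.one_apply, hjk]

theorem stmt_11 {m n : ℕ} (A : Matrix (Fin m) (Fin n) ℝ) (b : Fin m → ℝ) (c : Fin n → ℝ)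
    (Q₁ Q₂ : Matrix (Fin n) (Fin n) ℝ)
    (P₁ : Matrix (Fin m) (Fin m) ℝ) (P₂ : Matrix (Fin n) (Fin n) ℝ)
    (hP₁ : IsPermMatrix P₁) (hP₂ : IsPermMatrix P₂)
    (hQtilde : IsPermMatrix (Matrix.fromBlocks Q₁ Q₂ Q₂ Q₁))
    (hA : Matrix.fromBlocks P₁ 0 0 P₂ *
        Matrix.fromBlocks A (-A) (1 : Matrix (Fin n) (Fin n) ℝ) 1 *
        Matrix.fromBlocks Q₁ Q₂ Q₂ Q₁ =
      Matrix.fromBlocks A (-A) (1 : Matrix (Fin n) (Fin n) ℝ) 1)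
    (hc : (Matrix.fromBlocks Q₁ Q₂ Q₂ Q₁).mulVec (Sum.elim c (-c)) = Sum.elim c (-c))
    (hb : (Matrix.fromBlocks P₁ 0 0 P₂).mulVec
        (Sum.elim ((2 : ℝ) • b - A.mulVec 1) 1) =
      Sum.elim ((2 : ℝ) • b - A.mulVec 1) 1)
    (Q : Matrix (Fin n) (Fin n) ℝ) (hQ : Q = Q₁ - Q₂)
    (q : Fin n → ℝ) (hq : q = (1 - Q.mulVec 1) / 2) :
    Q.transpose.mulVec c = c ∧ P₁ * A * Q = A ∧
      P₁.mulVec (b - A.mulVec q) = b := by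
  -- extract block equations from hA
  rw [Matrix.fromBlocks_multiply, Matrix.fromBlocks_multiply, Matrix.fromBlocks_inj] at hA
  obtain ⟨h11, -, -, -⟩ := hA
  simp only [Matrix.zero_mul, add_zero, Matrix.mul_neg, zero_add,
    Matrix.mul_one, Matrix.neg_mul, Matrix.mul_zero] at h11
  -- second claim
  have hPAQ : P₁ * A * Q = A := by
    rw [hQ, Matrix.mul_sub, sub_eq_add_neg, ← Matrix.neg_mul]
    simpa using h11
  -- orthogonality of Q
  have hQtQ : Qᵀ * Q = 1 := by
    have h := perm_tmul hQtilde
    rw [Matrix.fromBlocks_transpose, Matrix.fromBlocks_multiply,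
      ← Matrix.fromBlocks_one, Matrix.fromBlocks_inj] at h
    obtain ⟨o11, o12, -, -⟩ := h
    rw [hQ]
    calc (Q₁ - Q₂)ᵀ * (Q₁ - Q₂)
        = (Q₁ᵀ * Q₁ + Q₂ᵀ * Q₂) - (Q₁ᵀ * Q₂ + Q₂ᵀ * Q₁) := by
          rw [Matrix.transpose_sub]; noncomm_ring
      _ = 1 := by rw [o11, o12]; simp
  -- Q c = c
  have hQc : Q.mulVec c = c := by
    have h1 : Q₁.mulVec c + Q₂.mulVec (-c) = c := by
      funext i
      have h := congrFun hc (Sum.inl i)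
      simpa [Matrix.fromBlocks_mulVec] using h
    rw [hQ, Matrix.sub_mulVec, sub_eq_add_neg]
    rw [Matrix.mulVec_neg] at h1
    exact h1
  -- first claim
  have goal1 : Qᵀ.mulVec c = c := by
    calc Qᵀ.mulVec c = Qᵀ.mulVec (Q.mulVec c) := by rw [hQc]
      _ = (Qᵀ * Q).mulVec c := Matrix.mulVec_mulVec c Qᵀ Q
      _ = c := by rw [hQtQ, Matrix.one_mulVec]
  refine ⟨goal1, hPAQ, ?_⟩
  -- third claim
  have h3 : P₁.mulVec ((2 : ℝ) • b - A.mulVec 1) = (2 : ℝ) • b - A.mulVec 1 := by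
    funext i
    have h := congrFun hb (Sum.inl i)
    simpa [Matrix.fromBlocks_mulVec] using h
  have hq2 : (2 : ℝ) • q = 1 - Q.mulVec 1 := by
    rw [hq]; funext i; simp [Pi.smul_apply, Pi.div_apply, Pi.sub_apply]; ring
  have key : (2 : ℝ) • (b - A.mulVec q) = ((2 : ℝ) • b - A.mulVec 1) + (A * Q).mulVec 1 := by
    rw [smul_sub, ← Matrix.mulVec_smul, hq2, Matrix.mulVec_sub, Matrix.mulVec_mulVec]
    abel
  have final2 : (2 : ℝ) • (P₁.mulVec (b - A.mulVec q)) = (2 : ℝ) • b := by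
    rw [← Matrix.mulVec_smul, key, Matrix.mulVec_add, h3, Matrix.mulVec_mulVec,
      ← Matrix.mul_assoc, hPAQ]
    abel
  have h2 : (2 : ℝ) ≠ 0 := two_ne_zero
  exact smul_right_injective (Fin m → ℝ) h2 final2
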